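/- A minimal conformation is determined by its type sequence up to rigid motion: if Γ and Γ′ are minimal conformations of the same length N ≥ 5 whose type sequences coincide, then there exist a lattice rotation R and t ∈ ℤ³ such that Γ′(k) = R(Γ(k)) + t for all 1 ≤ k ≤ N. -/
import Mathlib


/-- Points of the cubic lattice `ℤ³`. -/
abbrev P3 : Type := Fin 3 → ℤ

def e1 : P3 := ![1, 0, 0]
def e2 : P3 := ![0, 1, 0]
def e3 : P3 := ![0, 0, 1]

/-- Squared Euclidean norm of an integer vector; it equals `1` iff the
Euclidean norm equals `1`. -/
def sqNorm (v : P3) : ℤ := ∑ k, (v k) ^ 2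

/-- A conformation of length `N`: an injective map on `{1, …, N}` whose
consecutive steps have Euclidean length one. -/
def IsConformation (N : ℕ) (Γ : ℕ → P3) : Prop :=
  Set.InjOn Γ (Set.Icc 1 N) ∧ ∀ i, 1 ≤ i → i < N → sqNorm (Γ (i + 1) - Γ i) = 1

/-- A lattice rotation: an orthogonal integer matrix of determinant one
(equivalently, a linear isometry of `ℝ³` mapping `ℤ³` onto `ℤ³` with
determinant one). -/
def IsLatticeRotation (R : Matrix (Fin 3) (Fin 3) ℤ) : Prop :=
  R.transpose * R = 1 ∧ R.det = 1

/-- Equivalence of length-5 conformations: `Δ' k = R (Δ k) + t` for a lattice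
rotation `R` and translation `t ∈ ℤ³`. -/
def Equiv5 (Δ Δ' : Fin 5 → P3) : Prop :=
  ∃ (R : Matrix (Fin 3) (Fin 3) ℤ) (t : P3),
    IsLatticeRotation R ∧ ∀ k, Δ' k = R.mulVec (Δ k) + t

/-- Reversal of a length-5 conformation (`k ↦ Δ (6 - k)` in 1-based indexing). -/
def rev5 (Δ : Fin 5 → P3) : Fin 5 → P3 := fun k => Δ k.rev

/-- Conformation 1: vertices (0,0,0), (1,0,0), (1,1,0), (0,1,0), (0,1,1). -/
def conf1 : Fin 5 → P3 := ![![0, 0, 0], ![1, 0, 0], ![1, 1, 0], ![0, 1, 0], ![0, 1, 1]]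

/-- Conformation 2: vertices (0,0,0), (0,1,0), (−1,1,0), (−1,1,1), (−1,0,1). -/
def conf2 : Fin 5 → P3 := ![![0, 0, 0], ![0, 1, 0], ![-1, 1, 0], ![-1, 1, 1], ![-1, 0, 1]]

/-- The `i`-th window of `Γ`: the 5-tuple `(Γ(i-2), …, Γ(i+2))`. -/
def window (Γ : ℕ → P3) (i : ℕ) : Fin 5 → P3 := fun k => Γ (i - 2 + (k : ℕ))

/-- `Φ(Δ) = 1`: the 5-tuple `Δ` or its reversal is equivalent to
conformation 1 or to conformation 2. -/
def WindowGood (Δ : Fin 5 → P3) : Prop :=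
  Equiv5 Δ conf1 ∨ Equiv5 (rev5 Δ) conf1 ∨ Equiv5 Δ conf2 ∨ Equiv5 (rev5 Δ) conf2

open Classical in
/-- The function `Φ` on length-5 conformations. -/
noncomputable def Phi (Δ : Fin 5 → P3) : ℤ := if WindowGood Δ then 1 else 0

/-- The energy `E₅(Γ) = −Σ_{i=3}^{N−2} Φ(Γ_i)`. -/
noncomputable def E5 (N : ℕ) (Γ : ℕ → P3) : ℤ :=
  -∑ i ∈ Finset.Icc 3 (N - 2), Phi (window Γ i)

/-- A minimal conformation: a conformation all of whose windows satisfy `Φ = 1`. -/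
def IsMinimal (N : ℕ) (Γ : ℕ → P3) : Prop :=
  IsConformation N Γ ∧ ∀ i, 3 ≤ i → i ≤ N - 2 → WindowGood (window Γ i)

/-- The walk starting at the origin (in 1-based indexing) whose steps
cyclically repeat the given list. -/
def cyclicWalk (steps : List P3) : ℕ → P3
  | 0 => 0
  | 1 => 0
  | n + 2 => cyclicWalk steps (n + 1) + steps.getD (n % steps.length) 0

/-- The 16-term step sequence of the lattice α-helix. -/
def alphaStepList : List P3 :=
  [e1, e2, -e1, e3, -e2, e1, e2, e3, -e1, -e2, e1, e3, e2, -e1, -e2, e3]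

/-- The 4-term step sequence of the lattice β-strand. -/
def betaStepList : List P3 := [e1, e2, -e1, e3]

/-- The lattice α-helix (`H(1) = 0`, steps cyclically repeating `alphaStepList`). -/
def alphaHelix : ℕ → P3 := cyclicWalk alphaStepList

/-- The lattice β-strand (`B(1) = 0`, steps cyclically repeating `betaStepList`). -/
def betaStrand : ℕ → P3 := cyclicWalk betaStepList

/-- The four directed types of windows. -/
inductive DType : Type
  | r1  -- →1
  | l1  -- ←1
  | r2  -- →2
  | l2  -- ←2
deriving DecidableEq

/-- A window `Δ` has directed type `→1` (resp. `→2`) if it is equivalent to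
conformation 1 (resp. 2), and `←1` (resp. `←2`) if its reversal is. -/
def HasType (Δ : Fin 5 → P3) : DType → Prop
  | DType.r1 => Equiv5 Δ conf1
  | DType.l1 => Equiv5 (rev5 Δ) conf1
  | DType.r2 => Equiv5 Δ conf2
  | DType.l2 => Equiv5 (rev5 Δ) conf2

/-- The six allowed ordered pairs of directed types of consecutive windows:
(→1,←1), (←1,→1), (→1,→2), (→2,←2), (←2,←1), (←2,→2). -/
def allowedPairs : List (DType × DType) :=
  [(DType.r1, DType.l1), (DType.l1, DType.r1), (DType.r1, DType.r2),
   (DType.r2, DType.l2), (DType.l2, DType.l1), (DType.l2, DType.r2)]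

/-- `w` is the type sequence of `Γ` (a conformation of length `N`):
`w` has length `N − 4` and its `j`-th letter is the directed type of the
window `Γ_{3+j}`, `j = 0, …, N−5`. -/
def HasTypeSeq (N : ℕ) (Γ : ℕ → P3) (w : List DType) : Prop :=
  w.length = N - 4 ∧ ∀ j (h : j < w.length), HasType (window Γ (3 + j)) (w.get ⟨j, h⟩)

/-- The word `α = →1→2←2←1`. -/
def wordAlpha : List DType := [DType.r1, DType.r2, DType.l2, DType.l1]

/-- The word `β = →1←1`. -/
def wordBeta : List DType := [DType.r1, DType.l1]

/-- `v` is a finite concatenation of copies of the words `α` and `β`. -/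
def IsABConcat (v : List DType) : Prop :=
  ∃ L : List (List DType), (∀ u ∈ L, u = wordAlpha ∨ u = wordBeta) ∧ v = L.flatten

/-- A word is admissible if it is a contiguous subword (factor) of some finite
concatenation of copies of `α` and `β`. -/
def Admissible (w : List DType) : Prop := ∃ v, IsABConcat v ∧ w <:+: v

/-- The two kinds of monomers. -/
inductive AB : Type
  | A
  | B
deriving DecidableEq

/-- The number of occurrences of the letter `c` in the `i`-th 5-tuple
`S(i−2), …, S(i+2)` of the sequence `S`. -/
def countLetter (c : AB) (S : ℕ → AB) (i : ℕ) : ℕ :=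
  ((Finset.Icc (i - 2) (i + 2)).filter fun k => S k = c).card

open Classical in
/-- `Φ₁(Δ) = 1` iff `Δ` or its reversal is equivalent to conformation 1. -/
noncomputable def Phi1 (Δ : Fin 5 → P3) : ℝ :=
  if Equiv5 Δ conf1 ∨ Equiv5 (rev5 Δ) conf1 then 1 else 0

open Classical in
/-- `Φ₂(Δ) = 1` iff `Δ` or its reversal is equivalent to conformation 2. -/
noncomputable def Phi2 (Δ : Fin 5 → P3) : ℝ :=
  if Equiv5 Δ conf2 ∨ Equiv5 (rev5 Δ) conf2 then 1 else 0

/-- The heteropolymer energy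
`E₅′(S,Γ) = −Σᵢ [#_B(Sᵢ)(Φ₁(Γᵢ) + ε Φ₂(Γᵢ)) + #_A(Sᵢ)(Φ₂(Γᵢ) + ε Φ₁(Γᵢ))]`. -/
noncomputable def E5' (ε : ℝ) (S : ℕ → AB) (N : ℕ) (Γ : ℕ → P3) : ℝ :=
  -∑ i ∈ Finset.Icc 3 (N - 2),
    ((countLetter AB.B S i : ℝ) * (Phi1 (window Γ i) + ε * Phi2 (window Γ i)) +
      (countLetter AB.A S i : ℝ) * (Phi2 (window Γ i) + ε * Phi1 (window Γ i)))


section AuxForStatement11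
open Matrix
lemma latrot_mul_self_right {R : Matrix (Fin 3) (Fin 3) ℤ} (h : IsLatticeRotation R) :
    R * R.transpose = 1 := mul_eq_one_comm.mp h.1

lemma latrot_transpose {R : Matrix (Fin 3) (Fin 3) ℤ} (h : IsLatticeRotation R) :
    IsLatticeRotation R.transpose := by
  refine ⟨?_, by rw [Matrix.det_transpose]; exact h.2⟩
  rw [Matrix.transpose_transpose]
  exact latrot_mul_self_right h

lemma latrot_mul {R S : Matrix (Fin 3) (Fin 3) ℤ} (hR : IsLatticeRotation R)
    (hS : IsLatticeRotation S) : IsLatticeRotation (R * S) := by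
  constructor
  · rw [Matrix.transpose_mul]
    calc S.transpose * R.transpose * (R * S)
        = S.transpose * (R.transpose * R) * S := by
          rw [Matrix.mul_assoc, Matrix.mul_assoc, Matrix.mul_assoc]
      _ = 1 := by rw [hR.1, Matrix.mul_one]; exact hS.1
  · rw [Matrix.det_mul, hR.2, hS.2, mul_one]

lemma dot_mulVec_eq {R : Matrix (Fin 3) (Fin 3) ℤ} (h : R.transpose * R = 1)
    (u v : P3) : (R.mulVec u) ⬝ᵥ (R.mulVec v) = u ⬝ᵥ v := by
  rw [Matrix.dotProduct_mulVec, ← Matrix.mulVec_transpose, Matrix.mulVec_mulVec, h,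
    Matrix.one_mulVec]

lemma unit_entries (a : P3) (ha : sqNorm a = 1) :
    ∃ i : Fin 3, (a i = 1 ∨ a i = -1) ∧ ∀ j, j ≠ i → a j = 0 := by
  have h : a 0 ^ 2 + a 1 ^ 2 + a 2 ^ 2 = 1 := by
    simpa [sqNorm, Fin.sum_univ_three] using ha
  have b0 : a 0 = -1 ∨ a 0 = 0 ∨ a 0 = 1 := by
    have h1 : a 0 ^ 2 ≤ 1 := by nlinarith [sq_nonneg (a 1), sq_nonneg (a 2)]
    have h2 : -1 ≤ a 0 := by nlinarith
    have h3 : a 0 ≤ 1 := by nlinarith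
    omega
  have b1 : a 1 = -1 ∨ a 1 = 0 ∨ a 1 = 1 := by
    have h1 : a 1 ^ 2 ≤ 1 := by nlinarith [sq_nonneg (a 0), sq_nonneg (a 2)]
    have h2 : -1 ≤ a 1 := by nlinarith
    have h3 : a 1 ≤ 1 := by nlinarith
    omega
  have b2 : a 2 = -1 ∨ a 2 = 0 ∨ a 2 = 1 := by
    have h1 : a 2 ^ 2 ≤ 1 := by nlinarith [sq_nonneg (a 0), sq_nonneg (a 1)]
    have h2 : -1 ≤ a 2 := by nlinarith
    have h3 : a 2 ≤ 1 := by nlinarith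
    omega
  rcases b0 with h0 | h0 | h0 <;> rcases b1 with h1 | h1 | h1 <;> rcases b2 with h2 | h2 | h2 <;>
    first
      | exact ⟨0, by omega, fun j hj => by fin_cases j <;> simp_all⟩
      | exact ⟨1, by omega, fun j hj => by fin_cases j <;> simp_all⟩
      | exact ⟨2, by omega, fun j hj => by fin_cases j <;> simp_all⟩
      | (exfalso; rw [h0, h1, h2] at h; exact absurd h (by norm_num))

lemma fin3_cases (x : Fin 3) : x = 0 ∨ x = 1 ∨ x = 2 := by
  fin_cases x
  · exact Or.inl rfl
  · exact Or.inr (Or.inl rfl)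
  · exact Or.inr (Or.inr rfl)

lemma fix_col (Q : Matrix (Fin 3) (Fin 3) ℤ) (a : P3) (i : Fin 3)
    (hi : a i = 1 ∨ a i = -1) (hz : ∀ j, j ≠ i → a j = 0) (hQ : Q.mulVec a = a)
    (m : Fin 3) : Q m i = if m = i then 1 else 0 := by
  have hm := congrFun hQ m
  simp only [Matrix.mulVec, dotProduct, Fin.sum_univ_three] at hm
  rcases fin3_cases i with rfl | rfl | rfl <;> rcases fin3_cases m with rfl | rfl | rfl <;>
    (try simp only [Fin.reduceEq, reduceIte]) <;>
    [ (rw [hz 1 (by decide), hz 2 (by decide)] at hm);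
      (rw [hz 1 (by decide), hz 2 (by decide)] at hm);
      (rw [hz 1 (by decide), hz 2 (by decide)] at hm);
      (rw [hz 0 (by decide), hz 2 (by decide)] at hm);
      (rw [hz 0 (by decide), hz 2 (by decide)] at hm);
      (rw [hz 0 (by decide), hz 2 (by decide)] at hm);
      (rw [hz 0 (by decide), hz 1 (by decide)] at hm);
      (rw [hz 0 (by decide), hz 1 (by decide)] at hm);
      (rw [hz 0 (by decide), hz 1 (by decide)] at hm)] <;>
    rcases hi with h | h <;> rw [h] at hm <;>
    (try simp only [Fin.reduceEq, reduceIte]) <;>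
    first
      | (rw [hz _ (by decide)] at hm; omega)
      | omega
lemma rigid (Q : Matrix (Fin 3) (Fin 3) ℤ) (hQrot : IsLatticeRotation Q)
    (a b : P3) (ha : sqNorm a = 1) (hb : sqNorm b = 1) (hab : a ⬝ᵥ b = 0)
    (ea : Q.mulVec a = a) (eb : Q.mulVec b = b) : Q = 1 := by
  obtain ⟨i, hi, hzi⟩ := unit_entries a ha
  obtain ⟨j, hj, hzj⟩ := unit_entries b hb
  have hij : i ≠ j := by
    rintro rfl
    have hd : a 0 * b 0 + a 1 * b 1 + a 2 * b 2 = 0 := by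
      simpa [dotProduct, Fin.sum_univ_three] using hab
    rcases fin3_cases i with rfl | rfl | rfl
    · rw [hzi 1 (by decide), hzi 2 (by decide)] at hd
      rcases hi with h|h <;> rcases hj with h'|h' <;> rw [h, h'] at hd <;> omega
    · rw [hzi 0 (by decide), hzi 2 (by decide)] at hd
      rcases hi with h|h <;> rcases hj with h'|h' <;> rw [h, h'] at hd <;> omega
    · rw [hzi 0 (by decide), hzi 1 (by decide)] at hd
      rcases hi with h|h <;> rcases hj with h'|h' <;> rw [h, h'] at hd <;> omega
  have ci := fix_col Q a i hi hzi ea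
  have cj := fix_col Q b j hj hzj eb
  have hdet := hQrot.2
  have H : ∀ p q : Fin 3, Q 0 p * Q 0 q + Q 1 p * Q 1 q + Q 2 p * Q 2 q
      = if p = q then 1 else 0 := by
    intro p q
    have h2 := congrFun (congrFun hQrot.1 p) q
    simpa [Matrix.mul_apply, Matrix.transpose_apply, Matrix.one_apply,
      Fin.sum_univ_three] using h2
  rcases fin3_cases i with rfl | rfl | rfl <;> rcases fin3_cases j with rfl | rfl | rfl
  · exact absurd rfl hij
  · have ai0 : Q 0 0 = 1 := by simpa using ci 0
    have bj0 : Q 0 1 = 0 := by simpa using cj 0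
    have ai1 : Q 1 0 = 0 := by simpa using ci 1
    have bj1 : Q 1 1 = 1 := by simpa using cj 1
    have ai2 : Q 2 0 = 0 := by simpa using ci 2
    have bj2 : Q 2 1 = 0 := by simpa using cj 2
    have zik : Q 0 2 = 0 := by
      have h1 := H 2 0
      rw [ai0, ai1, ai2] at h1
      simpa using h1
    have zjk : Q 1 2 = 0 := by
      have h1 := H 2 1
      rw [bj0, bj1, bj2] at h1
      simpa using h1
    have qkk : Q 2 2 = 1 := by
      rw [Matrix.det_fin_three] at hdet
      rw [ai0, ai1, ai2, bj0, bj1, bj2, zik, zjk] at hdet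
      omega
    ext p q
    rcases fin3_cases p with rfl | rfl | rfl <;> rcases fin3_cases q with rfl | rfl | rfl <;>
      simp only [Matrix.one_apply, Fin.reduceEq, reduceIte, if_true, if_false] <;> omega
  · have ai0 : Q 0 0 = 1 := by simpa using ci 0
    have bj0 : Q 0 2 = 0 := by simpa using cj 0
    have ai1 : Q 1 0 = 0 := by simpa using ci 1
    have bj1 : Q 1 2 = 0 := by simpa using cj 1
    have ai2 : Q 2 0 = 0 := by simpa using ci 2
    have bj2 : Q 2 2 = 1 := by simpa using cj 2
    have zik : Q 0 1 = 0 := by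
      have h1 := H 1 0
      rw [ai0, ai1, ai2] at h1
      simpa using h1
    have zjk : Q 2 1 = 0 := by
      have h1 := H 1 2
      rw [bj0, bj1, bj2] at h1
      simpa using h1
    have qkk : Q 1 1 = 1 := by
      rw [Matrix.det_fin_three] at hdet
      rw [ai0, ai1, ai2, bj0, bj1, bj2, zik, zjk] at hdet
      omega
    ext p q
    rcases fin3_cases p with rfl | rfl | rfl <;> rcases fin3_cases q with rfl | rfl | rfl <;>
      simp only [Matrix.one_apply, Fin.reduceEq, reduceIte, if_true, if_false] <;> omega
  · have ai0 : Q 0 1 = 0 := by simpa using ci 0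
    have bj0 : Q 0 0 = 1 := by simpa using cj 0
    have ai1 : Q 1 1 = 1 := by simpa using ci 1
    have bj1 : Q 1 0 = 0 := by simpa using cj 1
    have ai2 : Q 2 1 = 0 := by simpa using ci 2
    have bj2 : Q 2 0 = 0 := by simpa using cj 2
    have zik : Q 1 2 = 0 := by
      have h1 := H 2 1
      rw [ai0, ai1, ai2] at h1
      simpa using h1
    have zjk : Q 0 2 = 0 := by
      have h1 := H 2 0
      rw [bj0, bj1, bj2] at h1
      simpa using h1
    have qkk : Q 2 2 = 1 := by
      rw [Matrix.det_fin_three] at hdet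
      rw [ai0, ai1, ai2, bj0, bj1, bj2, zik, zjk] at hdet
      omega
    ext p q
    rcases fin3_cases p with rfl | rfl | rfl <;> rcases fin3_cases q with rfl | rfl | rfl <;>
      simp only [Matrix.one_apply, Fin.reduceEq, reduceIte, if_true, if_false] <;> omega
  · exact absurd rfl hij
  · have ai0 : Q 0 1 = 0 := by simpa using ci 0
    have bj0 : Q 0 2 = 0 := by simpa using cj 0
    have ai1 : Q 1 1 = 1 := by simpa using ci 1
    have bj1 : Q 1 2 = 0 := by simpa using cj 1
    have ai2 : Q 2 1 = 0 := by simpa using ci 2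
    have bj2 : Q 2 2 = 1 := by simpa using cj 2
    have zik : Q 1 0 = 0 := by
      have h1 := H 0 1
      rw [ai0, ai1, ai2] at h1
      simpa using h1
    have zjk : Q 2 0 = 0 := by
      have h1 := H 0 2
      rw [bj0, bj1, bj2] at h1
      simpa using h1
    have qkk : Q 0 0 = 1 := by
      rw [Matrix.det_fin_three] at hdet
      rw [ai0, ai1, ai2, bj0, bj1, bj2, zik, zjk] at hdet
      omega
    ext p q
    rcases fin3_cases p with rfl | rfl | rfl <;> rcases fin3_cases q with rfl | rfl | rfl <;>
      simp only [Matrix.one_apply, Fin.reduceEq, reduceIte, if_true, if_false] <;> omega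
  · have ai0 : Q 0 2 = 0 := by simpa using ci 0
    have bj0 : Q 0 0 = 1 := by simpa using cj 0
    have ai1 : Q 1 2 = 0 := by simpa using ci 1
    have bj1 : Q 1 0 = 0 := by simpa using cj 1
    have ai2 : Q 2 2 = 1 := by simpa using ci 2
    have bj2 : Q 2 0 = 0 := by simpa using cj 2
    have zik : Q 2 1 = 0 := by
      have h1 := H 1 2
      rw [ai0, ai1, ai2] at h1
      simpa using h1
    have zjk : Q 0 1 = 0 := by
      have h1 := H 1 0
      rw [bj0, bj1, bj2] at h1
      simpa using h1
    have qkk : Q 1 1 = 1 := by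
      rw [Matrix.det_fin_three] at hdet
      rw [ai0, ai1, ai2, bj0, bj1, bj2, zik, zjk] at hdet
      omega
    ext p q
    rcases fin3_cases p with rfl | rfl | rfl <;> rcases fin3_cases q with rfl | rfl | rfl <;>
      simp only [Matrix.one_apply, Fin.reduceEq, reduceIte, if_true, if_false] <;> omega
  · have ai0 : Q 0 2 = 0 := by simpa using ci 0
    have bj0 : Q 0 1 = 0 := by simpa using cj 0
    have ai1 : Q 1 2 = 0 := by simpa using ci 1
    have bj1 : Q 1 1 = 1 := by simpa using cj 1
    have ai2 : Q 2 2 = 1 := by simpa using ci 2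
    have bj2 : Q 2 1 = 0 := by simpa using cj 2
    have zik : Q 2 0 = 0 := by
      have h1 := H 0 2
      rw [ai0, ai1, ai2] at h1
      simpa using h1
    have zjk : Q 1 0 = 0 := by
      have h1 := H 0 1
      rw [bj0, bj1, bj2] at h1
      simpa using h1
    have qkk : Q 0 0 = 1 := by
      rw [Matrix.det_fin_three] at hdet
      rw [ai0, ai1, ai2, bj0, bj1, bj2, zik, zjk] at hdet
      omega
    ext p q
    rcases fin3_cases p with rfl | rfl | rfl <;> rcases fin3_cases q with rfl | rfl | rfl <;>
      simp only [Matrix.one_apply, Fin.reduceEq, reduceIte, if_true, if_false] <;> omega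
  · exact absurd rfl hij

open Matrix in
lemma equiv5_symm {A B : Fin 5 → P3} (h : Equiv5 A B) : Equiv5 B A := by
  obtain ⟨R, t, hR, hpt⟩ := h
  refine ⟨R.transpose, -(R.transpose.mulVec t), latrot_transpose hR, fun k => ?_⟩
  rw [hpt k]
  simp [Matrix.mulVec_add, Matrix.mulVec_mulVec, hR.1, Matrix.one_mulVec]

open Matrix in
lemma equiv5_trans {A B C : Fin 5 → P3} (h1 : Equiv5 A B) (h2 : Equiv5 B C) :
    Equiv5 A C := by
  obtain ⟨R1, t1, hR1, hpt1⟩ := h1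
  obtain ⟨R2, t2, hR2, hpt2⟩ := h2
  refine ⟨R2 * R1, R2.mulVec t1 + t2, latrot_mul hR2 hR1, fun k => ?_⟩
  rw [hpt2 k, hpt1 k]
  simp [Matrix.mulVec_add, ← Matrix.mulVec_mulVec, add_assoc]

lemma equiv5_unrev {A B : Fin 5 → P3} (h : Equiv5 (rev5 A) (rev5 B)) : Equiv5 A B := by
  obtain ⟨R, t, hR, hpt⟩ := h
  exact ⟨R, t, hR, fun k => by simpa [rev5, Fin.rev_rev] using hpt k.rev⟩

lemma hasType_equiv {A B : Fin 5 → P3} (X : DType) (hA : HasType A X) (hB : HasType B X) :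
    Equiv5 A B := by
  cases X with
  | r1 => exact equiv5_trans hA (equiv5_symm hB)
  | l1 => exact equiv5_unrev (equiv5_trans hA (equiv5_symm hB))
  | r2 => exact equiv5_trans hA (equiv5_symm hB)
  | l2 => exact equiv5_unrev (equiv5_trans hA (equiv5_symm hB))

lemma windowGood_hasType {Δ : Fin 5 → P3} (h : WindowGood Δ) : ∃ X, HasType Δ X := by
  rcases h with h | h | h | h
  exacts [⟨DType.r1, h⟩, ⟨DType.l1, h⟩, ⟨DType.r2, h⟩, ⟨DType.l2, h⟩]

open Matrix in
lemma windowGood_orth {Δ : Fin 5 → P3} (h : WindowGood Δ) :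
    (Δ 3 - Δ 2) ⬝ᵥ (Δ 4 - Δ 3) = 0 := by
  have key : ∀ (C : Fin 5 → P3), Equiv5 Δ C →
      (Δ 3 - Δ 2) ⬝ᵥ (Δ 4 - Δ 3) = (C 3 - C 2) ⬝ᵥ (C 4 - C 3) := by
    rintro C ⟨R, t, hR, hpt⟩
    have h1 : R.mulVec (Δ 3 - Δ 2) = C 3 - C 2 := by
      rw [Matrix.mulVec_sub, hpt 3, hpt 2]; abel
    have h2 : R.mulVec (Δ 4 - Δ 3) = C 4 - C 3 := by
      rw [Matrix.mulVec_sub, hpt 4, hpt 3]; abel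
    rw [← dot_mulVec_eq hR.1 (Δ 3 - Δ 2) (Δ 4 - Δ 3), h1, h2]
  have keyR : ∀ (C : Fin 5 → P3), Equiv5 (rev5 Δ) C →
      (Δ 3 - Δ 2) ⬝ᵥ (Δ 4 - Δ 3) = (C 1 - C 2) ⬝ᵥ (C 0 - C 1) := by
    rintro C ⟨R, t, hR, hpt⟩
    have p0 : C 0 = R.mulVec (Δ 4) + t := by
      simpa [rev5, show ((0:Fin 5)).rev = 4 from rfl] using hpt 0
    have p1 : C 1 = R.mulVec (Δ 3) + t := by
      simpa [rev5, show ((1:Fin 5)).rev = 3 from rfl] using hpt 1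
    have p2 : C 2 = R.mulVec (Δ 2) + t := by
      simpa [rev5, show ((2:Fin 5)).rev = 2 from rfl] using hpt 2
    have h1 : R.mulVec (Δ 3 - Δ 2) = C 1 - C 2 := by
      rw [Matrix.mulVec_sub, p1, p2]; abel
    have h2 : R.mulVec (Δ 4 - Δ 3) = C 0 - C 1 := by
      rw [Matrix.mulVec_sub, p0, p1]; abel
    rw [← dot_mulVec_eq hR.1 (Δ 3 - Δ 2) (Δ 4 - Δ 3), h1, h2]
  rcases h with h | h | h | h
  · rw [key conf1 h]; decide
  · rw [keyR conf1 h]; decide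
  · rw [key conf2 h]; decide
  · rw [keyR conf2 h]; decide

open Matrix in
lemma window_equiv_points {N : ℕ} {Γ Γ' : ℕ → P3} (hΓ : IsMinimal N Γ)
    (hty : ∀ i, 3 ≤ i → i ≤ N - 2 →
      ∀ X : DType, HasType (window Γ i) X ↔ HasType (window Γ' i) X)
    (i : ℕ) (h3 : 3 ≤ i) (hi : i ≤ N - 2) :
    ∃ R t, IsLatticeRotation R ∧
      ∀ n, i - 2 ≤ n → n ≤ i + 2 → Γ' n = R.mulVec (Γ n) + t := by
  obtain ⟨X, hX⟩ := windowGood_hasType (hΓ.2 i h3 hi)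
  have hX' : HasType (window Γ' i) X := (hty i h3 hi X).1 hX
  obtain ⟨R, t, hR, hpt⟩ := hasType_equiv X hX hX'
  refine ⟨R, t, hR, fun n hn1 hn2 => ?_⟩
  have hk := hpt ⟨n - (i - 2), by omega⟩
  have e : i - 2 + (n - (i - 2)) = n := by omega
  simpa [window, e] using hk


end AuxForStatement11

/-- a minimal conformation is determined by its type sequence up
to rigid motion: if two minimal conformations of the same length `N ≥ 5` have
coinciding type sequences, then one is the image of the other under a lattice
rotation followed by a translation by a vector of `ℤ³`. -/
theorem minimal_determined_by_type_sequence (N : ℕ) (hN : 5 ≤ N)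
    (Γ Γ' : ℕ → P3) (hΓ : IsMinimal N Γ) (hΓ' : IsMinimal N Γ')
    (hty : ∀ i, 3 ≤ i → i ≤ N - 2 →
      ∀ X : DType, HasType (window Γ i) X ↔ HasType (window Γ' i) X) :
    ∃ (R : Matrix (Fin 3) (Fin 3) ℤ) (t : P3), IsLatticeRotation R ∧
      ∀ k, 1 ≤ k → k ≤ N → Γ' k = R.mulVec (Γ k) + t := by
  have hstep := hΓ.1.2
  have horth : ∀ i, 3 ≤ i → i ≤ N - 2 →
      dotProduct (Γ (i+1) - Γ i) (Γ (i+2) - Γ (i+1)) = 0 := by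
    intro i h3 hi
    have hw := windowGood_orth (hΓ.2 i h3 hi)
    simpa [window, show ((2:Fin 5):ℕ) = 2 from rfl, show ((3:Fin 5):ℕ) = 3 from rfl,
      show ((4:Fin 5):ℕ) = 4 from rfl, show i - 2 + 2 = i from by omega,
      show i - 2 + 3 = i + 1 from by omega, show i - 2 + 4 = i + 2 from by omega] using hw
  have hwin := window_equiv_points hΓ hty
  obtain ⟨R, t, hR, hbase⟩ := hwin 3 le_rfl (by omega)
  have main : ∀ i, 3 ≤ i → i ≤ N - 2 → ∀ n, i - 2 ≤ n → n ≤ i + 2 →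
      Γ' n = R.mulVec (Γ n) + t := by
    intro i h3
    induction i, h3 using Nat.le_induction with
    | base => intro _ n h1 h2; exact hbase n h1 h2
    | succ i hi3 IH =>
      intro hiN n hn1 hn2
      have hiN' : i ≤ N - 2 := by omega
      obtain ⟨R₂, t₂, hR₂, hw2⟩ := hwin (i+1) (by omega) hiN
      have pa : ∀ m, i ≤ m → m ≤ i + 2 → R.mulVec (Γ m) + t = R₂.mulVec (Γ m) + t₂ := by
        intro m hm1 hm2
        rw [← IH hiN' m (by omega) (by omega), hw2 m (by omega) (by omega)]
      have ea : R.mulVec (Γ (i+1) - Γ i) = R₂.mulVec (Γ (i+1) - Γ i) := by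
        have h1 := pa i le_rfl (by omega)
        have h2 := pa (i+1) (by omega) (by omega)
        rw [Matrix.mulVec_sub, Matrix.mulVec_sub]
        linear_combination h2 - h1
      have eb : R.mulVec (Γ (i+2) - Γ (i+1)) = R₂.mulVec (Γ (i+2) - Γ (i+1)) := by
        have h1 := pa (i+1) (by omega) (by omega)
        have h2 := pa (i+2) (by omega) (by omega)
        rw [Matrix.mulVec_sub, Matrix.mulVec_sub]
        linear_combination h2 - h1
      have hQrot : IsLatticeRotation (R₂.transpose * R) :=
        latrot_mul (latrot_transpose hR₂) hR
      have fixa : (R₂.transpose * R).mulVec (Γ (i+1) - Γ i) = Γ (i+1) - Γ i := by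
        rw [← Matrix.mulVec_mulVec, ea, Matrix.mulVec_mulVec, hR₂.1, Matrix.one_mulVec]
      have fixb : (R₂.transpose * R).mulVec (Γ (i+2) - Γ (i+1)) = Γ (i+2) - Γ (i+1) := by
        rw [← Matrix.mulVec_mulVec, eb, Matrix.mulVec_mulVec, hR₂.1, Matrix.one_mulVec]
      have hQ1 : R₂.transpose * R = 1 :=
        rigid _ hQrot _ _ (hstep i (by omega) (by omega))
          (hstep (i+1) (by omega) (by omega)) (horth i hi3 hiN') fixa fixb
      have hRR : R₂ = R := by
        have h1 : R₂ * (R₂.transpose * R) = R₂ * 1 := by rw [hQ1]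
        rw [← Matrix.mul_assoc, latrot_mul_self_right hR₂, Matrix.one_mul,
          Matrix.mul_one] at h1
        exact h1.symm
      have htt : t₂ = t := by
        have h1 := pa i le_rfl (by omega)
        rw [hRR] at h1
        exact (add_left_cancel h1).symm
      have h2 := hw2 n (by omega) (by omega)
      rwa [hRR, htt] at h2
  refine ⟨R, t, hR, fun k hk1 hkN => ?_⟩
  exact main (min (max k 3) (N - 2)) (by omega) (by omega) k (by omega) (by omega)
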